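/- Consider the equation E : 2x − y + 2z = 0 over [n], and define the coloring f : [n] → {−1, 1} by f(t) = −1 if t ≤ n/8 or t > n/2, and f(t) = 1 if n/8 < t ≤ n/2. Then the total number of solutions in [n]³ is n²/8 + O(n), the number of monochromatic solutions under f is n²/512 + O(n), and consequently limsup_{n→∞} μ_E([n]) ≤ 1/64 < 1/4, so E is uncommon over [n]. -/

import Mathlib

/-!
The solutions of `2x − y + 2z = 0` in `[n]³` are the triples `(x, 2s, s − x)` with
`1 ≤ x < s ≤ n/2`, so there are `C(⌊n/2⌋, 2)` of them. If `x` and `z` are red then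
`y = 2(x + z) > n/2` is blue; if they are blue then `x, z ≤ n/8` (otherwise `y > n`), so
`y ≤ n/2` and `y` is blue only when `y ≤ n/8`. Hence the monochromatic solutions are exactly
the solutions in `[⌊n/8⌋]³`, and there are `C(⌊n/16⌋, 2)` of them. Both counts are
`t²/2 + O(t)` for `t = n/2`, resp. `n/16`, and `64 · C(m, 2) ≤ C(8m, 2)` bounds the proportion
of monochromatic solutions by `1/64` for every `n`.
-/

open Finset Filter

/-- The set of solutions `(x, y, z) ∈ [n]³` to `a·x + b·y + c·z = 0`. -/
def solns (a b c : ℤ) (n : ℕ) : Finset (ℕ × ℕ × ℕ) :=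
  ((Finset.Icc 1 n) ×ˢ (Finset.Icc 1 n) ×ˢ (Finset.Icc 1 n)).filter
    fun p => a * (p.1 : ℤ) + b * (p.2.1 : ℤ) + c * (p.2.2 : ℤ) = 0

/-- The set of solutions that are monochromatic under the coloring `f`. -/
def mono (a b c : ℤ) (n : ℕ) (f : ℕ → Bool) : Finset (ℕ × ℕ × ℕ) :=
  (solns a b c n).filter fun p => f p.1 = f p.2.1 ∧ f p.1 = f p.2.2

/-- `μ_E([n])`: the minimum, over 2-colorings of `[n]`, of the proportion of
monochromatic solutions. -/
noncomputable def muMin (a b c : ℤ) (n : ℕ) : ℝ :=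
  sInf {r : ℝ | ∃ f : ℕ → Bool,
    r = ((mono a b c n f).card : ℝ) / ((solns a b c n).card : ℝ)}

/-- The coloring of `[n]` for `2x − y + 2z = 0`: `t` is blue (`false`, i.e. `−1`)
iff `t ≤ n/8` or `t > n/2`, and red (`true`, i.e. `1`) iff `n/8 < t ≤ n/2`. -/
def color2 (n : ℕ) : ℕ → Bool := fun t =>
  if 8 * t ≤ n ∨ n < 2 * t then false else true

theorem abs_cast_choose_two_floor_sub_le {t : ℝ} (ht : 0 ≤ t) :
    |(⌊t⌋₊.choose 2 : ℝ) - t ^ 2 / 2| ≤ 3 / 2 * t := by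
  have h_floor_le : (⌊t⌋₊ : ℝ) ≤ t := Nat.floor_le ht
  have h_lt_floor : t < ⌊t⌋₊ + 1 := Nat.lt_floor_add_one t
  rw [Nat.cast_choose_two, abs_le]
  constructor <;> nlinarith [Nat.cast_nonneg (α := ℝ) ⌊t⌋₊]

theorem abs_cast_choose_two_div_sub_le (n k : ℕ) :
    |(((n / k).choose 2 : ℕ) : ℝ) - (n : ℝ) ^ 2 / (2 * k ^ 2)| ≤ 3 / (2 * k) * (n : ℝ) := by
  have h := abs_cast_choose_two_floor_sub_le (t := (n : ℝ) / k) (by positivity)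
  rw [Nat.floor_div_eq_div] at h
  rw [show (n : ℝ) ^ 2 / (2 * k ^ 2) = (n / k) ^ 2 / 2 by ring,
    show 3 / (2 * k) * (n : ℝ) = 3 / 2 * (n / k) by ring]
  exact h

theorem sq_mul_choose_two_le (k m : ℕ) : k ^ 2 * m.choose 2 ≤ (k * m).choose 2 := by
  have hk : (k : ℝ) ≤ k ^ 2 := by exact_mod_cast Nat.le_self_pow two_ne_zero k
  have h : ((k ^ 2 * m.choose 2 : ℕ) : ℝ) ≤ ((k * m).choose 2 : ℕ) := by
    push_cast [Nat.cast_choose_two]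
    nlinarith [mul_le_mul_of_nonneg_right hk (Nat.cast_nonneg (α := ℝ) m)]
  exact_mod_cast h

theorem muMin_nonneg (a b c : ℤ) (n : ℕ) : 0 ≤ muMin a b c n :=
  Real.sInf_nonneg (by rintro r ⟨f, rfl⟩; positivity)

theorem muMin_le_div (a b c : ℤ) (n : ℕ) (f : ℕ → Bool) :
    muMin a b c n ≤ (#(mono a b c n f) : ℝ) / #(solns a b c n) :=
  csInf_le ⟨0, by rintro r ⟨g, rfl⟩; positivity⟩ ⟨f, rfl⟩

theorem card_solns_two_neg_one_two (n : ℕ) : #(solns 2 (-1) 2 n) = (n / 2).choose 2 := by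
  have h_card_Icc : #(Icc 1 (n / 2)) = n / 2 := by simp
  rw [← h_card_Icc, ← card_product_filter_lt]
  refine card_nbij' (fun p => (p.1, p.1 + p.2.2)) (fun q => (q.1, 2 * q.2, q.2 - q.1))
    ?_ ?_ ?_ ?_ <;> intro p hp <;>
    simp only [solns, coe_filter, mem_product, mem_Icc, Set.mem_ofPred_eq, Prod.ext_iff,
      true_and] at hp ⊢ <;> omega

theorem color2_eq_color2_iff (n s t : ℕ) :
    color2 n s = color2 n t ↔ (8 * s ≤ n ∨ n < 2 * s ↔ 8 * t ≤ n ∨ n < 2 * t) := by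
  unfold color2
  split_ifs <;> tauto

theorem mono_color2_eq_solns (n : ℕ) : mono 2 (-1) 2 n (color2 n) = solns 2 (-1) 2 (n / 8) := by
  ext ⟨x, y, z⟩
  simp only [mono, solns, mem_filter, mem_product, mem_Icc, color2_eq_color2_iff]
  omega

theorem card_mono_color2 (n : ℕ) : #(mono 2 (-1) 2 n (color2 n)) = (n / 16).choose 2 := by
  rw [mono_color2_eq_solns, card_solns_two_neg_one_two, Nat.div_div_eq_div_mul]

theorem sixty_four_mul_card_mono_color2_le (n : ℕ) :
    64 * #(mono 2 (-1) 2 n (color2 n)) ≤ #(solns 2 (-1) 2 n) := by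
  rw [card_mono_color2, card_solns_two_neg_one_two]
  calc 64 * (n / 16).choose 2 ≤ (8 * (n / 16)).choose 2 := sq_mul_choose_two_le 8 (n / 16)
    _ ≤ (n / 2).choose 2 := Nat.choose_le_choose 2 (by omega)

/-- For the equation `E : 2x − y + 2z = 0` over `[n]`, with the coloring
`f(t) = −1` iff `t ≤ n/8` or `t > n/2`: the total number of solutions is
`n²/8 + O(n)`, the number of monochromatic solutions is `n²/512 + O(n)`, and hence
`limsup_{n→∞} μ_E([n]) ≤ 1/64 < 1/4`, so `E` is uncommon over `[n]`. -/
theorem two_one_two_uncommon :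
    (∃ K : ℝ, ∀ n : ℕ,
      |((solns 2 (-1) 2 n).card : ℝ) - (n : ℝ) ^ 2 / 8| ≤ K * n) ∧
    (∃ K : ℝ, ∀ n : ℕ,
      |((mono 2 (-1) 2 n (color2 n)).card : ℝ) - (n : ℝ) ^ 2 / 512| ≤ K * n) ∧
    limsup (fun n => muMin 2 (-1) 2 n) atTop ≤ 1 / 64 ∧
    (1 : ℝ) / 64 < 1 / 4 := by
  refine ⟨⟨3 / 4, fun n => ?_⟩, ⟨3 / 32, fun n => ?_⟩, ?_, by norm_num⟩
  · have h := abs_cast_choose_two_div_sub_le n 2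
    norm_num at h
    rwa [card_solns_two_neg_one_two]
  · have h := abs_cast_choose_two_div_sub_le n 16
    norm_num at h
    rwa [card_mono_color2]
  · refine limsup_le_of_le (isCoboundedUnder_le_of_le atTop (muMin_nonneg 2 (-1) 2))
      (Eventually.of_forall fun n => (muMin_le_div 2 (-1) 2 n (color2 n)).trans ?_)
    refine div_le_of_le_mul₀ (by positivity) (by norm_num) ?_
    have h : ((64 * #(mono 2 (-1) 2 n (color2 n)) : ℕ) : ℝ) ≤ #(solns 2 (-1) 2 n) := by
      exact_mod_cast sixty_four_mul_card_mono_color2_le n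
    push_cast at h
    linarith
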